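/- Let K and L be essentially small tt-categories with K rigid, and let F : K → L be a tt-functor. If F detects ⊗-nilpotence of morphisms, i.e. every morphism f : x → y in K with F(f) = 0 satisfies f^⊗n = 0 for some n ≥ 1, then the induced map φ = Spc(F) : Spc(L) → Spc(K) is surjective. -/

import Mathlib

/-!
Basic notions of tensor-triangular geometry (Balmer), formalized from scratch:
tt-categories (pretriangulated + monoidal, with tensor exact in each variable),
tt-ideals, prime tt-ideals, the Balmer spectrum `Spc` with its topology,
tensor powers of objects and morphisms, rigidity.
-/

open CategoryTheory Category Limits ZeroObject Pretriangulated MonoidalCategory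

universe v u v' u'

namespace TT

variable (K : Type u) [Category.{v} K] [HasZeroObject K] [Preadditive K]
  [HasShift K ℤ] [∀ n : ℤ, (shiftFunctor K n).Additive] [Pretriangulated K]
  [MonoidalCategory K]

/-- The tensor is exact (triangulated) in each variable: tensoring a distinguished
triangle with an object (on either side) again yields a distinguished triangle. -/
def TensorExact : Prop :=
  ∀ (x : K) (T : Triangle K), (T ∈ distTriang K) →
    (∃ h : x ⊗ T.obj₃ ⟶ (x ⊗ T.obj₁)⟦(1:ℤ)⟧,
      Triangle.mk (x ◁ T.mor₁) (x ◁ T.mor₂) h ∈ distTriang K) ∧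
    (∃ h : T.obj₃ ⊗ x ⟶ (T.obj₁ ⊗ x)⟦(1:ℤ)⟧,
      Triangle.mk (T.mor₁ ▷ x) (T.mor₂ ▷ x) h ∈ distTriang K)

/-- Rigidity: every object `x` has a dual `x^∨`, i.e. takes part in an exact pairing
(coevaluation `η : 𝟙 ⟶ x^∨ ⊗ x` and evaluation `ε : x ⊗ x^∨ ⟶ 𝟙` satisfying the
triangle identities, which yield the adjunction `x ⊗ - ⊣ x^∨ ⊗ -`). -/
def Rigid : Prop := ∀ x : K, ∃ xd : K, Nonempty (ExactPairing xd x)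

variable {K}

/-- A tt-ideal: a (full, replete) class of objects closed under shifts, cones,
direct summands (retracts) and tensoring with arbitrary objects. -/
structure IsTTIdeal (I : Set K) : Prop where
  zero_mem : (0 : K) ∈ I
  shift_mem : ∀ (n : ℤ), ∀ x ∈ I, (x⟦n⟧ : K) ∈ I
  cone_mem : ∀ T : Triangle K, (T ∈ distTriang K) → T.obj₁ ∈ I → T.obj₂ ∈ I → T.obj₃ ∈ I
  retract_mem : ∀ x z : K, z ∈ I → ∀ (i : x ⟶ z) (r : z ⟶ x), i ≫ r = 𝟙 x → x ∈ I
  tensor_mem : ∀ x ∈ I, ∀ y : K, x ⊗ y ∈ I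
  tensor_mem' : ∀ x ∈ I, ∀ y : K, y ⊗ x ∈ I

/-- A prime tt-ideal: a proper tt-ideal `P` such that `x ⊗ y ∈ P` implies
`x ∈ P` or `y ∈ P`. -/
structure IsPrimeTTIdeal (P : Set K) extends IsTTIdeal P : Prop where
  ne_univ : P ≠ Set.univ
  mem_or_mem : ∀ x y : K, x ⊗ y ∈ P → x ∈ P ∨ y ∈ P

variable (K) in
/-- The Balmer spectrum: the set of prime tt-ideals. -/
def Spc := {P : Set K // IsPrimeTTIdeal P}

/-- The Balmer topology on `Spc K`, generated by the basic open subsets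
`U(x) = {P ∈ Spc K | x ∈ P}`. -/
instance : TopologicalSpace (Spc K) :=
  TopologicalSpace.generateFrom {U | ∃ x : K, U = {P : Spc K | x ∈ P.1}}

/-- The tt-ideal `⟨E⟩` generated by a class of objects `E`. -/
def ttIdealGen (E : Set K) : Set K := ⋂₀ {I : Set K | IsTTIdeal I ∧ E ⊆ I}

/-- `n`-fold tensor power of an object (`x^⊗0 = 𝟙`). -/
def opow (x : K) : ℕ → K
  | 0 => 𝟙_ K
  | n + 1 => opow x n ⊗ x

/-- `n`-fold tensor power `f^⊗n` of a morphism. -/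
def mpow {x y : K} (f : x ⟶ y) : ∀ n : ℕ, (opow x n ⟶ opow y n)
  | 0 => 𝟙 _
  | n + 1 => mpow f n ⊗ₘ f

end TT

/-!
Fix a prime `P` of `K`. Call `ξ : 𝟙 ⟶ U` an isomorphism modulo `P` if it is a composite of
isomorphisms and of maps whose fibre lies in `P`, and let `N ⊆ L` consist of the objects `z` with
`z ⊗ F(ξ)^⊗n = 0` for such a `ξ` and some `n` (and similarly for all shifts of `z`). Using duals,
every `p ∈ P` is killed by the cone `ξ` of its evaluation, so `F(P) ⊆ N`; and `N` is a tt-ideal.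
If `F s ∈ N`, then `F (s ⊗ ξ^⊗n) = 0`, so `(s ⊗ ξ^⊗n)^⊗m = 0` by nilpotence detection; a map which
is an isomorphism modulo `P` and factors through `0` has its source in `P`, so `s^⊗m ∈ P` and
`s ∈ P`. Hence `N` misses the `⊗`-multiplicative class `F(K ∖ P)`, and a tt-ideal of `L` maximal
among those containing `N` and missing `F(K ∖ P)` is a prime `Q` with `F⁻¹(Q) = P`.
-/
namespace TT

section Ideals

variable {C : Type u} [Category.{v} C] [HasZeroObject C] [Preadditive C] [HasShift C ℤ]
  [∀ n : ℤ, (shiftFunctor C n).Additive] [Pretriangulated C] [MonoidalCategory C]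

namespace IsTTIdeal

variable {I : Set C}

lemma mem_of_iso (hI : IsTTIdeal I) {x y : C} (e : x ≅ y) (hy : y ∈ I) : x ∈ I :=
  hI.retract_mem x y hy e.hom e.inv e.hom_inv_id

lemma mem_of_isZero (hI : IsTTIdeal I) {x : C} (h : IsZero x) : x ∈ I :=
  hI.mem_of_iso (h.iso (isZero_zero C)) hI.zero_mem

lemma obj₂_mem (hI : IsTTIdeal I) (T : Triangle C) (hT : T ∈ distTriang C) (h₁ : T.obj₁ ∈ I)
    (h₃ : T.obj₃ ∈ I) : T.obj₂ ∈ I :=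
  hI.cone_mem T.invRotate (inv_rot_of_distTriang T hT) (hI.shift_mem (-1) _ h₃) h₁

lemma biprod_mem (hI : IsTTIdeal I) {x y : C} (hx : x ∈ I) (hy : y ∈ I) : (x ⊞ y) ∈ I :=
  hI.obj₂_mem _ (binaryBiproductTriangle_distinguished x y) hx hy

lemma eq_univ_of_unit_mem (hI : IsTTIdeal I) (h : 𝟙_ C ∈ I) : I = Set.univ :=
  Set.eq_univ_of_forall fun x => hI.mem_of_iso (λ_ x).symm (hI.tensor_mem _ h x)

lemma sUnion {c : Set (Set C)} (hc : ∀ I ∈ c, IsTTIdeal I) (hchain : IsChain (· ⊆ ·) c)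
    (hne : c.Nonempty) : IsTTIdeal (⋃₀ c) where
  zero_mem := hne.elim fun I hI => ⟨I, hI, (hc I hI).zero_mem⟩
  shift_mem := by
    rintro n x ⟨I, hI, hx⟩
    exact ⟨I, hI, (hc I hI).shift_mem n x hx⟩
  cone_mem := by
    rintro T hT ⟨I₁, hI₁, h₁⟩ ⟨I₂, hI₂, h₂⟩
    rcases hchain.total hI₁ hI₂ with h | h
    · exact ⟨I₂, hI₂, (hc I₂ hI₂).cone_mem T hT (h h₁) h₂⟩
    · exact ⟨I₁, hI₁, (hc I₁ hI₁).cone_mem T hT h₁ (h h₂)⟩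
  retract_mem := by
    rintro x z ⟨I, hI, hz⟩ i r hir
    exact ⟨I, hI, (hc I hI).retract_mem x z hz i r hir⟩
  tensor_mem := by
    rintro x ⟨I, hI, hx⟩ y
    exact ⟨I, hI, (hc I hI).tensor_mem x hx y⟩
  tensor_mem' := by
    rintro x ⟨I, hI, hx⟩ y
    exact ⟨I, hI, (hc I hI).tensor_mem' x hx y⟩

end IsTTIdeal

lemma IsPrimeTTIdeal.mem_of_opow_mem {P : Set C} (hP : IsPrimeTTIdeal P) {s : C} {m : ℕ}
    (h : opow s m ∈ P) : s ∈ P := by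
  induction m with
  | zero => exact absurd (hP.eq_univ_of_unit_mem h) hP.ne_univ
  | succ m ih => exact (hP.mem_or_mem _ _ h).elim ih id

lemma isTTIdeal_ttIdealGen (E : Set C) : IsTTIdeal (ttIdealGen E) where
  zero_mem _ hI := hI.1.zero_mem
  shift_mem n x hx I hI := hI.1.shift_mem n x (hx I hI)
  cone_mem T hT h₁ h₂ I hI := hI.1.cone_mem T hT (h₁ I hI) (h₂ I hI)
  retract_mem x z hz i r hir I hI := hI.1.retract_mem x z (hz I hI) i r hir
  tensor_mem x hx y I hI := hI.1.tensor_mem x (hx I hI) y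
  tensor_mem' x hx y I hI := hI.1.tensor_mem' x (hx I hI) y

lemma subset_ttIdealGen (E : Set C) : E ⊆ ttIdealGen E :=
  fun _ hx _ hI => hI.2 hx

lemma ttIdealGen_subset {E I : Set C} (hI : IsTTIdeal I) (hE : E ⊆ I) : ttIdealGen E ⊆ I :=
  fun _ hx => hx I ⟨hI, hE⟩

end Ideals

def FactorsThrough {C : Type u} [Category.{v} C] (I : Set C) {x y : C} (f : x ⟶ y) : Prop :=
  ∃ G ∈ I, ∃ (p : x ⟶ G) (q : G ⟶ y), p ≫ q = f

lemma FactorsThrough.comp {C : Type u} [Category.{v} C] {I : Set C} {x y z : C} {f : x ⟶ y}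
    (hf : FactorsThrough I f) (g : y ⟶ z) : FactorsThrough I (f ≫ g) := by
  obtain ⟨G, hG, p, q, rfl⟩ := hf
  exact ⟨G, hG, p, q ≫ g, by simp⟩

section IsoModulo

variable {C : Type u} [Category.{v} C] [HasZeroObject C] [Preadditive C] [HasShift C ℤ]
  [∀ n : ℤ, (shiftFunctor C n).Additive] [Pretriangulated C] {I : Set C}

def HasFiberIn (I : Set C) {x y : C} (g : x ⟶ y) : Prop :=
  ∃ A ∈ I, ∃ (u : A ⟶ x) (w : y ⟶ A⟦(1 : ℤ)⟧), Triangle.mk u g w ∈ distTriang C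

/-- Without the octahedral axiom a composite of maps with fibre in `I` need not have fibre in `I`,
so the composites are kept as a class of their own. -/
inductive IsIsoModulo (I : Set C) : ∀ {x y : C}, (x ⟶ y) → Prop
  | of_isIso {x y : C} (g : x ⟶ y) [IsIso g] : IsIsoModulo I g
  | comp_hasFiberIn {x y z : C} {g : x ⟶ y} {h : y ⟶ z} :
      IsIsoModulo I g → HasFiberIn I h → IsIsoModulo I (g ≫ h)
  | comp_isIso {x y z : C} {g : x ⟶ y} (h : y ⟶ z) [IsIso h] :
      IsIsoModulo I g → IsIsoModulo I (g ≫ h)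

lemma IsIsoModulo.id (I : Set C) (x : C) : IsIsoModulo I (𝟙 x) := .of_isIso _

lemma HasFiberIn.isIsoModulo {x y : C} {g : x ⟶ y} (hg : HasFiberIn I g) : IsIsoModulo I g := by
  simpa using (IsIsoModulo.id I x).comp_hasFiberIn hg

lemma IsIsoModulo.comp {x y z : C} {g : x ⟶ y} {h : y ⟶ z} (hg : IsIsoModulo I g)
    (hh : IsIsoModulo I h) : IsIsoModulo I (g ≫ h) := by
  induction hh with
  | of_isIso h => exact .comp_isIso h hg
  | comp_hasFiberIn _ hh₂ ih => rw [← assoc]; exact ih.comp_hasFiberIn hh₂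
  | comp_isIso h₂ _ ih => rw [← assoc]; exact .comp_isIso h₂ ih

/-- Lifting the factorisation `p ≫ q` of `ψ ≫ T.mor₂` along the cone `H` of `q ≫ T.mor₃`
writes `ψ` as a sum of maps through `H⟦-1⟧` and `T.obj₁`. -/
lemma factorsThrough_of_comp_mor₂ [MonoidalCategory C] (hI : IsTTIdeal I) (T : Triangle C)
    (hT : T ∈ distTriang C) (h₁ : T.obj₁ ∈ I) {X : C} (ψ : X ⟶ T.obj₂)
    (hψ : FactorsThrough I (ψ ≫ T.mor₂)) :
    FactorsThrough I ψ := by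
  obtain ⟨G, hG, p, q, hpq⟩ := hψ
  obtain ⟨H, k, l, hT₂⟩ := distinguished_cocone_triangle (q ≫ T.mor₃)
  have hH : H ∈ I := hI.cone_mem _ hT₂ hG (hI.shift_mem 1 _ h₁)
  have hT₂' := inv_rot_of_distTriang _ hT₂
  obtain ⟨χ, hχ⟩ := Triangle.coyoneda_exact₂ _ hT₂' p (by
    change p ≫ q ≫ T.mor₃ = 0
    rw [← assoc, hpq, assoc, comp_distTriang_mor_zero₂₃ _ hT, comp_zero])
  set m := (Triangle.mk (q ≫ T.mor₃) k l).invRotate.mor₁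
  obtain ⟨mt, hmt⟩ := Triangle.coyoneda_exact₃ _ hT (m ≫ q)
    ((assoc _ _ _).trans (comp_distTriang_mor_zero₁₂ _ hT₂'))
  obtain ⟨ζ, hζ⟩ := Triangle.coyoneda_exact₂ _ hT (ψ - χ ≫ mt) (by
    rw [Preadditive.sub_comp, ← hpq, hχ, sub_eq_zero]
    exact (assoc _ _ _).trans ((congrArg (χ ≫ ·) hmt).trans (assoc _ _ _).symm))
  refine ⟨H⟦(-1 : ℤ)⟧ ⊞ T.obj₁, hI.biprod_mem (hI.shift_mem _ _ hH) h₁,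
    biprod.lift χ ζ, biprod.desc mt T.mor₁, ?_⟩
  refine biprod.lift_desc.trans ?_
  rw [← hζ]
  exact add_sub_cancel _ _

lemma IsIsoModulo.mem_of_factorsThrough [MonoidalCategory C] (hI : IsTTIdeal I) {x y : C}
    {g : x ⟶ y} (hg : IsIsoModulo I g) (hf : FactorsThrough I g) : x ∈ I := by
  induction hg with
  | of_isIso g =>
      obtain ⟨G, hG, p, q, hpq⟩ := hf
      exact hI.retract_mem _ _ hG p (q ≫ inv g) (by rw [← assoc, hpq, IsIso.hom_inv_id])
  | comp_hasFiberIn _ hh ih =>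
      obtain ⟨A, hA, u, w, hT⟩ := hh
      exact ih (factorsThrough_of_comp_mor₂ hI _ hT hA _ hf)
  | comp_isIso h _ ih => exact ih (by simpa using hf.comp (inv h))

end IsoModulo

section Torsion

variable {C : Type u} [Category.{v} C] [MonoidalCategory C]

def tensorPow (U z : C) : ℕ → C
  | 0 => z
  | n + 1 => tensorPow U z n ⊗ U

def tensorPowMap (U : C) {z z' : C} (f : z ⟶ z') : ∀ n, tensorPow U z n ⟶ tensorPow U z' n
  | 0 => f
  | n + 1 => tensorPowMap U f n ▷ U

def mulRight {U : C} (ξ : 𝟙_ C ⟶ U) (X : C) : X ⟶ X ⊗ U := (ρ_ X).inv ≫ X ◁ ξ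

/-- The morphism `z ⊗ ξ^⊗n : z ⟶ z ⊗ U^⊗n`. -/
def mulRightIter {U : C} (ξ : 𝟙_ C ⟶ U) (z : C) : ∀ n, z ⟶ tensorPow U z n
  | 0 => 𝟙 z
  | n + 1 => mulRightIter ξ z n ≫ mulRight ξ (tensorPow U z n)

def IsTorsion [HasZeroMorphisms C] {U : C} (ξ : 𝟙_ C ⟶ U) (z : C) : Prop :=
  ∃ n, mulRightIter ξ z n = 0

variable {U : C} {ξ : 𝟙_ C ⟶ U}

lemma mulRight_naturality {X Y : C} (f : X ⟶ Y) : f ≫ mulRight ξ Y = mulRight ξ X ≫ f ▷ U := by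
  simp only [mulRight, assoc]
  rw [whisker_exchange, rightUnitor_inv_naturality_assoc]

lemma mulRightIter_naturality {z z' : C} (f : z ⟶ z') (n : ℕ) :
    f ≫ mulRightIter ξ z' n = mulRightIter ξ z n ≫ tensorPowMap U f n := by
  induction n with
  | zero => dsimp only [mulRightIter, tensorPowMap, tensorPow]; simp
  | succ n ih =>
    dsimp only [mulRightIter, tensorPowMap, tensorPow]
    rw [← assoc, ih, assoc, assoc, mulRight_naturality]

lemma tensorPow_add (z : C) (m n : ℕ) :
    tensorPow U (tensorPow U z m) n = tensorPow U z (m + n) := by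
  induction n with
  | zero => rfl
  | succ n ih => exact congrArg (· ⊗ U) ih

lemma mulRightIter_add (z : C) (m n : ℕ) :
    mulRightIter ξ z (m + n) =
      mulRightIter ξ z m ≫ mulRightIter ξ (tensorPow U z m) n ≫ eqToHom (tensorPow_add z m n) := by
  induction n with
  | zero => dsimp only [mulRightIter, tensorPow]; simp
  | succ n ih =>
    have h : ∀ {X Y : C} (e : X = Y),
        eqToHom e ≫ mulRight ξ Y = mulRight ξ X ≫ eqToHom (congrArg (· ⊗ U) e) := by
      rintro _ _ rfl
      simp
    change mulRightIter ξ z (m + n) ≫ mulRight ξ _ =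
      mulRightIter ξ z m ≫ (mulRightIter ξ _ n ≫ mulRight ξ _) ≫ eqToHom _
    rw [ih]
    simp only [assoc, h]

lemma isTorsion_of_mulRightIter_eq_comp [HasZeroMorphisms C] {z w : C} {m : ℕ}
    (f : z ⟶ w) (g : w ⟶ tensorPow U z m) (hfg : mulRightIter ξ z m = f ≫ g)
    (hw : IsTorsion ξ w) : IsTorsion ξ z := by
  obtain ⟨n, hn⟩ := hw
  refine ⟨m + n, ?_⟩
  rw [mulRightIter_add, hfg, assoc, ← assoc g, mulRightIter_naturality, hn]
  simp

lemma IsTorsion.of_retract [HasZeroMorphisms C] {x z : C} (i : x ⟶ z) (r : z ⟶ x)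
    (hir : i ≫ r = 𝟙 x) (h : IsTorsion ξ z) : IsTorsion ξ x := by
  obtain ⟨n, hn⟩ := h
  refine ⟨n, ?_⟩
  rw [← id_comp (mulRightIter ξ x n), ← hir, assoc, mulRightIter_naturality, ← assoc i, hn]
  simp

lemma IsTorsion.of_iso [HasZeroMorphisms C] {z z' : C} (e : z ≅ z') (h : IsTorsion ξ z) :
    IsTorsion ξ z' :=
  h.of_retract e.inv e.hom e.inv_hom_id

lemma IsTorsion.of_isZero [HasZeroMorphisms C] {z : C} (h : IsZero z) : IsTorsion ξ z :=
  ⟨1, h.eq_of_src _ _⟩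

lemma exists_mulRightIter_comp_eq {U' : C} (g : U ⟶ U') (z : C) (n : ℕ) :
    ∃ D : tensorPow U z n ⟶ tensorPow U' z n,
      mulRightIter (ξ ≫ g) z n = mulRightIter ξ z n ≫ D := by
  induction n with
  | zero => exact ⟨𝟙 z, by dsimp only [mulRightIter, tensorPow]; simp⟩
  | succ n ih =>
    obtain ⟨D, hD⟩ := ih
    refine ⟨D ▷ U ≫ tensorPow U' z n ◁ g, ?_⟩
    have h : mulRight (ξ ≫ g) (tensorPow U' z n) =
        mulRight ξ (tensorPow U' z n) ≫ tensorPow U' z n ◁ g := by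
      simp [mulRight]
    dsimp only [mulRightIter, tensorPow]
    rw [hD, h, assoc, ← assoc D, mulRight_naturality D, assoc, assoc]

lemma IsTorsion.comp [HasZeroMorphisms C] {U' : C} (g : U ⟶ U') {z : C} (h : IsTorsion ξ z) :
    IsTorsion (ξ ≫ g) z := by
  obtain ⟨n, hn⟩ := h
  obtain ⟨D, hD⟩ := exists_mulRightIter_comp_eq (ξ := ξ) g z n
  exact ⟨n, by rw [hD, hn, zero_comp]⟩

lemma comp_mulRight_eq {U₁ U₂ : C} (ξ₁ : 𝟙_ C ⟶ U₁) (ξ₂ : 𝟙_ C ⟶ U₂) :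
    ξ₁ ≫ mulRight ξ₂ U₁ = ξ₂ ≫ (λ_ U₂).inv ≫ ξ₁ ▷ U₂ := by
  simp only [mulRight]
  rw [rightUnitor_inv_naturality_assoc, ← whisker_exchange, ← unitors_inv_equal,
    ← leftUnitor_inv_naturality_assoc]

def tensorPowTensorIso (U a z : C) : ∀ n, tensorPow U (a ⊗ z) n ≅ a ⊗ tensorPow U z n
  | 0 => Iso.refl _
  | n + 1 => whiskerRightIso (tensorPowTensorIso U a z n) U ≪≫ α_ a (tensorPow U z n) U

lemma mulRight_tensor (a W : C) : mulRight ξ (a ⊗ W) ≫ (α_ a W U).hom = a ◁ mulRight ξ W := by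
  simp only [mulRight, MonoidalCategory.whiskerLeft_comp, rightUnitor_tensor_inv, assoc]
  rw [← associator_inv_naturality_right_assoc]
  simp

lemma mulRightIter_tensor (a z : C) (n : ℕ) :
    mulRightIter ξ (a ⊗ z) n ≫ (tensorPowTensorIso U a z n).hom = a ◁ mulRightIter ξ z n := by
  induction n with
  | zero => dsimp only [mulRightIter, tensorPowTensorIso, tensorPow]; simp
  | succ n ih =>
    dsimp only [mulRightIter, tensorPowTensorIso, tensorPow]
    rw [MonoidalCategory.whiskerLeft_comp, ← ih, ← mulRight_tensor, Iso.trans_hom,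
      whiskerRightIso_hom, assoc, ← assoc (mulRight ξ _), ← mulRight_naturality]
    simp only [assoc]

end Torsion

section TensorExact

variable {C : Type u} [Category.{v} C] [HasZeroObject C] [Preadditive C] [HasShift C ℤ]
  [∀ n : ℤ, (shiftFunctor C n).Additive] [Pretriangulated C] [MonoidalCategory C]

lemma isZero_tensor_zero (hC : TensorExact C) (a : C) : IsZero (a ⊗ (0 : C)) := by
  obtain ⟨h, hT⟩ := (hC a _ (contractible_distinguished (0 : C))).1
  refine Triangle.isZero₃_of_isIso₁ _ hT ?_
  change IsIso (a ◁ 𝟙 (0 : C))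
  rw [MonoidalCategory.whiskerLeft_id]
  infer_instance

lemma whiskerLeft_zero_of_tensorExact (hC : TensorExact C) (a : C) {x y : C} :
    a ◁ (0 : x ⟶ y) = 0 := by
  rw [← zero_comp (Y := (0 : C)) (f := (0 : (0 : C) ⟶ y)), MonoidalCategory.whiskerLeft_comp,
    (isZero_tensor_zero hC a).eq_of_src (a ◁ _) 0, comp_zero]

lemma IsTorsion.tensor_left (hC : TensorExact C) {U : C} {ξ : 𝟙_ C ⟶ U} {z : C}
    (h : IsTorsion ξ z) (a : C) : IsTorsion ξ (a ⊗ z) := by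
  obtain ⟨n, hn⟩ := h
  refine ⟨n, ?_⟩
  rw [← cancel_mono (tensorPowTensorIso U a z n).hom, mulRightIter_tensor, hn,
    whiskerLeft_zero_of_tensorExact hC, zero_comp]

lemma IsTorsion.obj₃ {U : C} {ξ : 𝟙_ C ⟶ U} (T : Triangle C) (hT : T ∈ distTriang C)
    (h₁ : IsTorsion ξ (T.obj₁⟦(1 : ℤ)⟧)) (h₂ : IsTorsion ξ T.obj₂) : IsTorsion ξ T.obj₃ := by
  obtain ⟨m, hm⟩ := h₂
  obtain ⟨e, he⟩ := Triangle.yoneda_exact₂ _ (rot_of_distTriang _ hT) (mulRightIter ξ T.obj₃ m)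
    (by
      change T.mor₂ ≫ _ = 0
      rw [mulRightIter_naturality, hm, zero_comp])
  exact isTorsion_of_mulRightIter_eq_comp _ e he h₁

lemma nonempty_tensor_shift_one_iso (hC : TensorExact C) (a z : C) :
    Nonempty (a ⊗ z⟦(1 : ℤ)⟧ ≅ (a ⊗ z)⟦(1 : ℤ)⟧) := by
  obtain ⟨h, hT⟩ := (hC a _ (rot_of_distTriang _ (contractible_distinguished z))).1
  have := (Triangle.isZero₂_iff_isIso₃ _ hT).1 (isZero_tensor_zero hC a)
  exact ⟨@asIso _ _ _ _ h this⟩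

lemma nonempty_tensor_shift_iso (hC : TensorExact C) (a z : C) (k : ℤ) :
    Nonempty (a ⊗ z⟦k⟧ ≅ (a ⊗ z)⟦k⟧) := by
  induction k using Int.induction_on with
  | zero =>
    exact ⟨whiskerLeftIso a ((shiftFunctorZero C ℤ).app z) ≪≫
      ((shiftFunctorZero C ℤ).app (a ⊗ z)).symm⟩
  | succ k ih =>
    obtain ⟨e⟩ := ih
    obtain ⟨e₁⟩ := nonempty_tensor_shift_one_iso hC a (z⟦(k : ℤ)⟧)
    exact ⟨whiskerLeftIso a ((shiftFunctorAdd C (k : ℤ) 1).app z) ≪≫ e₁ ≪≫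
      (shiftFunctor C (1 : ℤ)).mapIso e ≪≫ ((shiftFunctorAdd C (k : ℤ) 1).app (a ⊗ z)).symm⟩
  | pred k ih =>
    obtain ⟨e⟩ := ih
    obtain ⟨e₁⟩ := nonempty_tensor_shift_one_iso hC a (z⟦-(k : ℤ) - 1⟧)
    let c := shiftFunctorAdd' C (-(k : ℤ) - 1) 1 (-k) (by ring)
    exact ⟨(shiftFunctor C (1 : ℤ)).preimageIso
      (e₁.symm ≪≫ whiskerLeftIso a (c.app z).symm ≪≫ e ≪≫ c.app (a ⊗ z))⟩

variable {I : Set C}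

lemma HasFiberIn.whiskerLeft (hC : TensorExact C) (hI : IsTTIdeal I) {x y : C} {g : x ⟶ y}
    (hg : HasFiberIn I g) (a : C) : HasFiberIn I (a ◁ g) := by
  obtain ⟨A, hA, u, w, hT⟩ := hg
  obtain ⟨h, hT'⟩ := (hC a _ hT).1
  exact ⟨a ⊗ A, hI.tensor_mem' A hA a, a ◁ u, h, hT'⟩

lemma HasFiberIn.whiskerRight (hC : TensorExact C) (hI : IsTTIdeal I) {x y : C} {g : x ⟶ y}
    (hg : HasFiberIn I g) (a : C) : HasFiberIn I (g ▷ a) := by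
  obtain ⟨A, hA, u, w, hT⟩ := hg
  obtain ⟨h, hT'⟩ := (hC a _ hT).2
  exact ⟨A ⊗ a, hI.tensor_mem A hA a, u ▷ a, h, hT'⟩

lemma IsIsoModulo.whiskerLeft (hC : TensorExact C) (hI : IsTTIdeal I) {x y : C} {g : x ⟶ y}
    (hg : IsIsoModulo I g) (a : C) : IsIsoModulo I (a ◁ g) := by
  induction hg with
  | of_isIso g => exact .of_isIso _
  | comp_hasFiberIn _ hh ih =>
    rw [MonoidalCategory.whiskerLeft_comp]
    exact ih.comp_hasFiberIn (hh.whiskerLeft hC hI a)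
  | comp_isIso h _ ih =>
    rw [MonoidalCategory.whiskerLeft_comp]
    exact .comp_isIso _ ih

lemma IsIsoModulo.whiskerRight (hC : TensorExact C) (hI : IsTTIdeal I) {x y : C} {g : x ⟶ y}
    (hg : IsIsoModulo I g) (a : C) : IsIsoModulo I (g ▷ a) := by
  induction hg with
  | of_isIso g => exact .of_isIso _
  | comp_hasFiberIn _ hh ih =>
    rw [MonoidalCategory.comp_whiskerRight]
    exact ih.comp_hasFiberIn (hh.whiskerRight hC hI a)
  | comp_isIso h _ ih =>
    rw [MonoidalCategory.comp_whiskerRight]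
    exact .comp_isIso _ ih

lemma IsIsoModulo.tensorHom (hC : TensorExact C) (hI : IsTTIdeal I) {x y x' y' : C}
    {g : x ⟶ y} {g' : x' ⟶ y'} (hg : IsIsoModulo I g) (hg' : IsIsoModulo I g') :
    IsIsoModulo I (g ⊗ₘ g') := by
  rw [MonoidalCategory.tensorHom_def]
  exact (hg.whiskerRight hC hI x').comp (hg'.whiskerLeft hC hI y)

lemma IsIsoModulo.mulRight (hC : TensorExact C) (hI : IsTTIdeal I) {U : C} {ξ : 𝟙_ C ⟶ U}
    (hξ : IsIsoModulo I ξ) (X : C) : IsIsoModulo I (mulRight ξ X) :=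
  (IsIsoModulo.of_isIso (ρ_ X).inv).comp (hξ.whiskerLeft hC hI X)

lemma IsIsoModulo.mulRightIter (hC : TensorExact C) (hI : IsTTIdeal I) {U : C}
    {ξ : 𝟙_ C ⟶ U} (hξ : IsIsoModulo I ξ) (z : C) (n : ℕ) : IsIsoModulo I (mulRightIter ξ z n) := by
  induction n with
  | zero => exact .id I z
  | succ n ih => exact ih.comp (hξ.mulRight hC hI _)

lemma IsIsoModulo.mpow (hC : TensorExact C) (hI : IsTTIdeal I) {x y : C} {f : x ⟶ y}
    (hf : IsIsoModulo I f) (n : ℕ) : IsIsoModulo I (mpow f n) := by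
  induction n with
  | zero => exact .id I _
  | succ n ih => exact ih.tensorHom hC hI hf

end TensorExact

section Braided

variable {C : Type u} [Category.{v} C] [HasZeroObject C] [Preadditive C] [HasShift C ℤ]
  [∀ n : ℤ, (shiftFunctor C n).Additive] [Pretriangulated C] [MonoidalCategory C]
  [BraidedCategory C]

lemma isTTIdeal_setOf_tensor_mem (hC : TensorExact C) {J : Set C} (hJ : IsTTIdeal J) (z : C) :
    IsTTIdeal {w : C | z ⊗ w ∈ J} where
  zero_mem := hJ.mem_of_isZero (isZero_tensor_zero hC z)
  shift_mem n w hw := hJ.mem_of_iso (nonempty_tensor_shift_iso hC z w n).some (hJ.shift_mem n _ hw)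
  cone_mem T hT h₁ h₂ := hJ.cone_mem _ (hC z T hT).1.choose_spec h₁ h₂
  retract_mem x w hw i r hir := hJ.retract_mem _ _ hw (z ◁ i) (z ◁ r) (by
    rw [← MonoidalCategory.whiskerLeft_comp, hir, MonoidalCategory.whiskerLeft_id])
  tensor_mem w hw v := hJ.mem_of_iso (α_ z w v).symm (hJ.tensor_mem _ hw v)
  tensor_mem' w hw v :=
    hJ.mem_of_iso (whiskerLeftIso z (β_ v w) ≪≫ (α_ z w v).symm) (hJ.tensor_mem _ hw v)

lemma tensor_mem_of_mem_ttIdealGen (hC : TensorExact C) {J : Set C} (hJ : IsTTIdeal J)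
    {E₁ E₂ : Set C} (hE : ∀ e₁ ∈ E₁, ∀ e₂ ∈ E₂, e₁ ⊗ e₂ ∈ J) {a₁ a₂ : C}
    (h₁ : a₁ ∈ ttIdealGen E₁) (h₂ : a₂ ∈ ttIdealGen E₂) : a₁ ⊗ a₂ ∈ J := by
  have hE₁ : ∀ e₁ ∈ E₁, e₁ ⊗ a₂ ∈ J := fun e₁ he₁ =>
    ttIdealGen_subset (isTTIdeal_setOf_tensor_mem hC hJ e₁) (hE e₁ he₁) h₂
  have : a₂ ⊗ a₁ ∈ J := ttIdealGen_subset (isTTIdeal_setOf_tensor_mem hC hJ a₂)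
    (fun e₁ he₁ => hJ.mem_of_iso (β_ a₂ e₁) (hE₁ e₁ he₁)) h₁
  exact hJ.mem_of_iso (β_ a₁ a₂) this

/-- A maximal tt-ideal containing `J` and disjoint from `S` is prime. -/
lemma exists_isPrimeTTIdeal_of_disjoint (hC : TensorExact C) {J S : Set C} (hJ : IsTTIdeal J)
    (hJS : Disjoint J S) (hSne : S.Nonempty)
    (hS : ∀ a ∈ S, ∀ b ∈ S, ∃ c ∈ S, Nonempty (c ≅ a ⊗ b)) :
    ∃ Q, IsPrimeTTIdeal Q ∧ J ⊆ Q ∧ Disjoint Q S := by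
  obtain ⟨Q, hJQ, hmax⟩ := zorn_subset_nonempty {I : Set C | IsTTIdeal I ∧ Disjoint I S}
    (fun c hc hchain hne => ⟨⋃₀ c,
      ⟨IsTTIdeal.sUnion (fun I hI => (hc hI).1) hchain hne,
        Set.disjoint_sUnion_left.2 fun I hI => (hc hI).2⟩,
      fun _ => Set.subset_sUnion_of_mem⟩) J ⟨hJ, hJS⟩
  obtain ⟨hQ, hQS⟩ := hmax.prop
  have meets : ∀ a ∉ Q, ∃ s ∈ S, s ∈ ttIdealGen (insert a Q) := by
    intro a ha
    by_contra! h
    have hQa := hmax.eq_of_subset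
      ⟨isTTIdeal_ttIdealGen _, Set.disjoint_right.2 fun s hs => h s hs⟩
      ((Set.subset_insert a Q).trans (subset_ttIdealGen _))
    exact ha (hQa ▸ subset_ttIdealGen _ (Set.mem_insert a Q))
  refine ⟨Q, ⟨hQ, ?_, ?_⟩, hJQ, hQS⟩
  · rintro rfl
    obtain ⟨s, hs⟩ := hSne
    exact Set.disjoint_left.1 hQS (Set.mem_univ s) hs
  · intro a b hab
    by_contra! h
    obtain ⟨s₁, hs₁, h₁⟩ := meets a h.1
    obtain ⟨s₂, hs₂, h₂⟩ := meets b h.2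
    obtain ⟨c, hc, ⟨e⟩⟩ := hS s₁ hs₁ s₂ hs₂
    refine Set.disjoint_left.1 hQS
      (hQ.mem_of_iso e (tensor_mem_of_mem_ttIdealGen hC hQ ?_ h₁ h₂)) hc
    rintro e₁ (rfl | he₁) e₂ (rfl | he₂)
    · exact hab
    · exact hQ.tensor_mem' _ he₂ _
    · exact hQ.tensor_mem _ he₁ _
    · exact hQ.tensor_mem _ he₁ _

/-- With `ξ` the cone of the evaluation `ε : y ⊗ yd ⟶ 𝟙`, the map `ε ▷ y` is split by the
triangle identity and followed by `ξ ▷ y` in a distinguished triangle, so `ξ ▷ y = 0`. -/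
lemma exists_hasFiberIn_isTorsion (hC : TensorExact C) {P : Set C} (hP : IsTTIdeal P) {y : C}
    (hy : y ∈ P) (yd : C) [ExactPairing yd y] :
    ∃ (U : C) (ξ : 𝟙_ C ⟶ U), HasFiberIn P ξ ∧ IsTorsion ξ y := by
  obtain ⟨U, ξ, δ, hT⟩ := distinguished_cocone_triangle (ε_ yd y)
  refine ⟨U, ξ, ⟨_, hP.tensor_mem y hy yd, _, δ, hT⟩, 1, ?_⟩
  obtain ⟨_, hT'⟩ := (hC y _ hT).2
  have hsplit : ((λ_ y).hom ≫ (ρ_ y).inv ≫ y ◁ η_ yd y ≫ (α_ y yd y).inv) ≫ ε_ yd y ▷ y =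
      𝟙 _ := by
    simp [ExactPairing.coevaluation_evaluation]
  have hξy : ξ ▷ y = 0 := by
    rw [← id_comp (ξ ▷ y), ← hsplit, assoc]
    exact (comp_distTriang_mor_zero₁₂ _ hT').symm ▸ comp_zero
  have hyξ : y ◁ ξ = 0 := by
    rw [← cancel_mono (β_ y U).hom, BraidedCategory.braiding_naturality_right, hξy, comp_zero,
      zero_comp]
  change 𝟙 y ≫ (ρ_ y).inv ≫ y ◁ ξ = 0
  rw [hyξ, comp_zero, comp_zero]

end Braided

section Transfer

variable {K : Type u} [Category.{v} K] [MonoidalCategory K]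
  {L : Type u'} [Category.{v'} L] [MonoidalCategory L] (F : K ⥤ L) [F.Monoidal]

def mapTensorPowIso (U W : K) : ∀ n, F.obj (tensorPow U W n) ≅ tensorPow (F.obj U) (F.obj W) n
  | 0 => Iso.refl _
  | n + 1 => (Functor.Monoidal.μIso F (tensorPow U W n) U).symm ≪≫
      whiskerRightIso (mapTensorPowIso U W n) (F.obj U)

def mapFromUnit {U : K} (ξ : 𝟙_ K ⟶ U) : 𝟙_ L ⟶ F.obj U := Functor.LaxMonoidal.ε F ≫ F.map ξ

lemma mapFromUnit_comp {U U' : K} (ξ : 𝟙_ K ⟶ U) (g : U ⟶ U') :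
    mapFromUnit F (ξ ≫ g) = mapFromUnit F ξ ≫ F.map g := by
  simp [mapFromUnit]

lemma map_mulRight {U : K} (ξ : 𝟙_ K ⟶ U) (X : K) :
    F.map (mulRight ξ X) = mulRight (mapFromUnit F ξ) (F.obj X) ≫ Functor.LaxMonoidal.μ F X U := by
  rw [mulRight, F.map_comp, Functor.Monoidal.map_rightUnitor_inv, Functor.Monoidal.map_whiskerLeft]
  simp [mulRight, mapFromUnit, MonoidalCategory.whiskerLeft_comp]

lemma map_mulRightIter_comp {U : K} (ξ : 𝟙_ K ⟶ U) (W : K) (n : ℕ) :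
    F.map (mulRightIter ξ W n) ≫ (mapTensorPowIso F U W n).hom =
      mulRightIter (mapFromUnit F ξ) (F.obj W) n := by
  induction n with
  | zero => dsimp only [mulRightIter, mapTensorPowIso, tensorPow]; simp
  | succ n ih =>
    dsimp only [mulRightIter, mapTensorPowIso, tensorPow]
    rw [F.map_comp, map_mulRight, Iso.trans_hom, Iso.symm_hom, whiskerRightIso_hom, assoc, assoc,
      ← Functor.Monoidal.μIso_hom, Iso.hom_inv_id_assoc, ← mulRight_naturality, ← assoc, ih]

lemma IsTorsion.map [HasZeroMorphisms K] [HasZeroMorphisms L] [F.PreservesZeroMorphisms]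
    {U : K} {ξ : 𝟙_ K ⟶ U} {w : K} (h : IsTorsion ξ w) : IsTorsion (mapFromUnit F ξ) (F.obj w) := by
  obtain ⟨n, hn⟩ := h
  exact ⟨n, by rw [← map_mulRightIter_comp, hn, F.map_zero, zero_comp]⟩

lemma exists_map_mulRightIter_eq_zero [HasZeroMorphisms L] {U : K} {ξ : 𝟙_ K ⟶ U} {w : K}
    (h : IsTorsion (mapFromUnit F ξ) (F.obj w)) : ∃ n, F.map (mulRightIter ξ w n) = 0 := by
  obtain ⟨n, hn⟩ := h
  exact ⟨n, by rw [← cancel_mono (mapTensorPowIso F U w n).hom, map_mulRightIter_comp, hn,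
    zero_comp]⟩

end Transfer

section TorsionIdeal

variable {K : Type u} [Category.{v} K] [HasZeroObject K] [Preadditive K] [HasShift K ℤ]
  [∀ n : ℤ, (shiftFunctor K n).Additive] [Pretriangulated K] [MonoidalCategory K]
  {L : Type u'} [Category.{v'} L] [Preadditive L] [HasShift L ℤ] [MonoidalCategory L]
  (F : K ⥤ L) [F.Monoidal] {P : Set K}

/-- Quantifying over all shifts makes this class closed under shifts, although `⊗` is only known
to commute with shifts up to non-natural isomorphisms. -/
def torsionIdeal (P : Set K) : Set L :=
  {z | ∀ k : ℤ, ∃ (U : K) (ξ : 𝟙_ K ⟶ U), IsIsoModulo P ξ ∧ IsTorsion (mapFromUnit F ξ) (z⟦k⟧)}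

lemma isTTIdeal_torsionIdeal [HasZeroObject L] [∀ n : ℤ, (shiftFunctor L n).Additive]
    [Pretriangulated L] [BraidedCategory L] (hK : TensorExact K) (hL : TensorExact L)
    (hP : IsTTIdeal P) : IsTTIdeal (torsionIdeal F P) where
  zero_mem k := ⟨𝟙_ K, 𝟙 _, .id _ _, .of_isZero ((shiftFunctor L k).map_isZero (isZero_zero L))⟩
  shift_mem n x hx k := by
    obtain ⟨U, ξ, hξ, h⟩ := hx (n + k)
    exact ⟨U, ξ, hξ, h.of_iso ((shiftFunctorAdd' L n k (n + k) rfl).app x)⟩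
  cone_mem T hT h₁ h₂ k := by
    obtain ⟨U₁, ξ₁, hξ₁, h₁⟩ := h₁ (k + 1)
    obtain ⟨U₂, ξ₂, hξ₂, h₂⟩ := h₂ k
    -- `ξ₁ ⊗ ξ₂` factors through both `ξ₁` and `ξ₂`
    refine ⟨U₁ ⊗ U₂, ξ₁ ≫ mulRight ξ₂ U₁, hξ₁.comp (hξ₂.mulRight hK hP U₁), ?_⟩
    refine IsTorsion.obj₃ _ (Triangle.shift_distinguished T hT k) ?_ ?_
    · rw [mapFromUnit_comp]
      exact (h₁.of_iso ((shiftFunctorAdd' L k 1 (k + 1) rfl).app T.obj₁)).comp _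
    · rw [comp_mulRight_eq, mapFromUnit_comp]
      exact h₂.comp _
  retract_mem x z hz i r hir k := by
    obtain ⟨U, ξ, hξ, h⟩ := hz k
    exact ⟨U, ξ, hξ, h.of_retract ((shiftFunctor L k).map i) ((shiftFunctor L k).map r)
      (by rw [← Functor.map_comp, hir, (shiftFunctor L k).map_id])⟩
  tensor_mem x hx y k := by
    obtain ⟨U, ξ, hξ, h⟩ := hx k
    exact ⟨U, ξ, hξ, ((h.tensor_left hL y).of_iso (nonempty_tensor_shift_iso hL y x k).some).of_iso
      ((shiftFunctor L k).mapIso (β_ y x))⟩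
  tensor_mem' x hx y k := by
    obtain ⟨U, ξ, hξ, h⟩ := hx k
    exact ⟨U, ξ, hξ, (h.tensor_left hL y).of_iso (nonempty_tensor_shift_iso hL y x k).some⟩

lemma map_mem_torsionIdeal [BraidedCategory K] [F.CommShift ℤ] [F.PreservesZeroMorphisms]
    (hK : TensorExact K) (hrigid : Rigid K) (hP : IsTTIdeal P) {p : K} (hp : p ∈ P) :
    F.obj p ∈ torsionIdeal F P := by
  intro k
  obtain ⟨pd, ⟨_⟩⟩ := hrigid (p⟦k⟧)
  obtain ⟨U, ξ, hξ, h⟩ := exists_hasFiberIn_isTorsion hK hP (hP.shift_mem k p hp) pd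
  exact ⟨U, ξ, hξ.isIsoModulo, (IsTorsion.map F h).of_iso ((F.commShiftIso k).app p)⟩

lemma mem_of_map_mem_torsionIdeal (hK : TensorExact K) (hP : IsPrimeTTIdeal P)
    (hdet : ∀ ⦃x y : K⦄ (f : x ⟶ y), F.map f = 0 → ∃ n : ℕ, 1 ≤ n ∧ mpow f n = 0) {s : K}
    (hs : F.obj s ∈ torsionIdeal F P) : s ∈ P := by
  obtain ⟨U, ξ, hξ, h⟩ := hs 0
  obtain ⟨n, hn⟩ := exists_map_mulRightIter_eq_zero F
    (h.of_iso ((shiftFunctorZero L ℤ).app (F.obj s)))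
  obtain ⟨m, -, hm⟩ := hdet _ hn
  have hiso : IsIsoModulo P (mpow (mulRightIter ξ s n) m) :=
    (hξ.mulRightIter hK hP.toIsTTIdeal s n).mpow hK hP.toIsTTIdeal m
  exact hP.mem_of_opow_mem
    (hiso.mem_of_factorsThrough hP.toIsTTIdeal ⟨0, hP.zero_mem, 0, 0, by rw [hm, zero_comp]⟩)

end TorsionIdeal

end TT

open TT

variable {K : Type u} [Category.{v} K] [HasZeroObject K] [Preadditive K]
  [HasShift K ℤ] [∀ n : ℤ, (shiftFunctor K n).Additive] [Pretriangulated K]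
  [MonoidalCategory K] [SymmetricCategory K] [EssentiallySmall.{v} K]
variable {L : Type u'} [Category.{v'} L] [HasZeroObject L] [Preadditive L]
  [HasShift L ℤ] [∀ n : ℤ, (shiftFunctor L n).Additive] [Pretriangulated L]
  [MonoidalCategory L] [SymmetricCategory L] [EssentiallySmall.{v'} L]

/-- **Theorem (Balmer).** Let `K`, `L` be essentially small tt-categories with `K` rigid
and `F : K ⥤ L` a tt-functor. If `F` detects ⊗-nilpotence of morphisms
(`F(f) = 0 ⟹ f^⊗n = 0` for some `n ≥ 1`), then the induced map
`φ = Spc F : Spc L → Spc K`, `Q ↦ F⁻¹(Q)`, is surjective. -/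
theorem surjective_of_detects_nilpotence
    (hK : TensorExact K) (hL : TensorExact L) (hrigid : Rigid K)
    (F : K ⥤ L) [F.CommShift ℤ] [F.IsTriangulated] [F.Monoidal]
    (hdet : ∀ ⦃x y : K⦄ (f : x ⟶ y), F.map f = 0 → ∃ n : ℕ, 1 ≤ n ∧ mpow f n = 0) :
    ∀ P : Spc K, ∃ Q : Spc L, {x : K | F.obj x ∈ Q.1} = P.1 := by
  rintro ⟨P, hP⟩
  have hunit : 𝟙_ K ∉ P := fun h => hP.ne_univ (hP.eq_univ_of_unit_mem h)
  obtain ⟨Q, hQ, hNQ, hQS⟩ := exists_isPrimeTTIdeal_of_disjoint hL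
    (isTTIdeal_torsionIdeal F hK hL hP.toIsTTIdeal) (S := F.obj '' Pᶜ)
    (Set.disjoint_left.2 fun _ hN ⟨s, hs, hsN⟩ =>
      hs (mem_of_map_mem_torsionIdeal F hK hP hdet (hsN ▸ hN)))
    ⟨_, _, hunit, rfl⟩
    (by
      rintro _ ⟨s₁, hs₁, rfl⟩ _ ⟨s₂, hs₂, rfl⟩
      exact ⟨F.obj (s₁ ⊗ s₂), ⟨_, fun h => (hP.mem_or_mem _ _ h).elim hs₁ hs₂, rfl⟩,
        ⟨(Functor.Monoidal.μIso F s₁ s₂).symm⟩⟩)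
  refine ⟨⟨Q, hQ⟩, Set.Subset.antisymm (fun x hx => ?_)
    fun x hx => hNQ (map_mem_torsionIdeal F hK hrigid hP.toIsTTIdeal hx)⟩
  by_contra hxP
  exact Set.disjoint_left.1 hQS hx ⟨x, hxP, rfl⟩
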